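/- Every 4-dimensional Lie algebra over an algebraically closed field has a Lie subalgebra of codimension 1, i.e. a Lie subalgebra whose underlying vector space has dimension 3. (This is the case n = 2 of the paper's main theorem that an (n+2)-dimensional n-Lie algebra over an algebraically closed field has a subalgebra of codimension 1.) -/

import Mathlib

/-!
If every `ad x` is nilpotent, `A` is nilpotent by Engel's theorem, hence `[A, A] ≠ A`, and every
hyperplane containing `[A, A]` is a subalgebra. Otherwise choose `x` with `ad x` not nilpotent and
split `A` into the generalized eigenspaces `A_μ` of `ad x`: then `x ∈ A_0`, `[A_μ, A_ν] ⊆ A_{μ+ν}`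
and `A_α ≠ 0` for some `α ≠ 0`. Running through the few possible dimension patterns:
* `dim A_0 = 3`: take `A_0`;
* `dim A_0 = 2`: take `A_0 ⊕ A_α` if `dim A_α = 1`; if `dim A_α = 2`, the brackets `[A_α, A_α]`
  span at most a line `L ⊆ A_0`, and `A_α ⊕ L` (or `A_α ⊕ F x` when `L = 0`) works;
* `dim A_0 = 1`, i.e. `A_0 = F x`: if `dim A_α = 3`, add `x` to an `ad x`-invariant plane of
  `A_α`. Otherwise eigenvectors `y, z` for nonzero eigenvalues `α ≠ β` such that `α + β` is not a
  nonzero eigenvalue satisfy `[y, z] ∈ F x`, so `x, y, z` span a subalgebra. Such a pair exists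
  unless there are three nonzero eigenvalues, each the sum of the other two (so the
  characteristic is 2), and then their three eigenvectors span a subalgebra.
-/

open Module Submodule LieAlgebra

section LinearAlgebra

variable {K V : Type*} [Field K] [AddCommGroup V] [Module K V]

theorem Module.End.exists_hasEigenvector_of_maxGenEigenspace_ne_bot {f : End K V} {μ : K}
    (h : f.maxGenEigenspace μ ≠ ⊥) : ∃ v, f.HasEigenvector μ v :=
  HasEigenvalue.exists_hasEigenvector (HasUnifEigenvalue.lt zero_lt_one h)

variable [FiniteDimensional K V]

theorem iSupIndep.finrank_biSup {ι : Type*} {p : ι → Submodule K V} (hp : iSupIndep p)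
    (s : Finset ι) : finrank K ↥(⨆ i ∈ s, p i) = ∑ i ∈ s, finrank K (p i) := by
  classical
  induction s using Finset.induction_on with
  | empty => simp
  | insert a s ha ih =>
    have hdisj : Disjoint (p a) (⨆ i ∈ s, p i) := by
      simpa using hp.disjoint_biSup (y := ↑s) (by simpa using ha)
    rw [Finset.iSup_insert, Finset.sum_insert ha, ← ih, ← finrank_sup_add_finrank_inf_eq,
      hdisj.eq_bot, finrank_bot, add_zero]

namespace Module.End

variable (f : End K V)

theorem sum_finrank_maxGenEigenspace_le (s : Finset K) :
    ∑ μ ∈ s, finrank K (f.maxGenEigenspace μ) ≤ finrank K V := by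
  rw [← f.independent_maxGenEigenspace.finrank_biSup]
  exact Submodule.finrank_le _

theorem maxGenEigenspace_eq_bot_of_sum_finrank_eq {s : Finset K}
    (hs : ∑ μ ∈ s, finrank K (f.maxGenEigenspace μ) = finrank K V) {σ : K} (hσ : σ ∉ s) :
    f.maxGenEigenspace σ = ⊥ := by
  have htop : ⨆ μ ∈ s, f.maxGenEigenspace μ = ⊤ := Submodule.eq_top_of_finrank_eq
    (by rw [f.independent_maxGenEigenspace.finrank_biSup, hs])
  simpa [htop] using f.independent_maxGenEigenspace.disjoint_biSup (y := ↑s) (by simpa using hσ)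

theorem maxGenEigenspace_le_of_sum_finrank_eq {s : Finset K}
    (hs : ∑ μ ∈ s, finrank K (f.maxGenEigenspace μ) = finrank K V) {σ τ : K}
    (h : σ ∈ s → σ = τ) : f.maxGenEigenspace σ ≤ f.maxGenEigenspace τ := by
  by_cases hσ : σ ∈ s
  · rw [h hσ]
  · rw [f.maxGenEigenspace_eq_bot_of_sum_finrank_eq hs hσ]
    exact bot_le

theorem exists_maxGenEigenspace_ne_bot_of_sum_finrank_lt [IsAlgClosed K] {s : Finset K}
    (hs : ∑ μ ∈ s, finrank K (f.maxGenEigenspace μ) < finrank K V) :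
    ∃ σ ∉ s, f.maxGenEigenspace σ ≠ ⊥ := by
  by_contra! h
  have htop : ⨆ μ ∈ s, f.maxGenEigenspace μ = ⊤ := by
    rw [eq_top_iff, ← f.iSup_maxGenEigenspace_eq_top]
    refine iSup_le fun μ => ?_
    by_cases hμ : μ ∈ s
    · exact le_biSup _ hμ
    · rw [h μ hμ]
      exact bot_le
  rw [← f.independent_maxGenEigenspace.finrank_biSup, htop, finrank_top] at hs
  exact lt_irrefl _ hs

theorem isNilpotent_of_maxGenEigenspace_zero_eq_top (h : f.maxGenEigenspace 0 = ⊤) :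
    IsNilpotent f := by
  refine ⟨finrank K V, LinearMap.ext fun v => ?_⟩
  have hv : v ∈ f.maxGenEigenspace 0 := h ▸ mem_top
  rw [maxGenEigenspace_eq_genEigenspace_finrank, mem_genEigenspace_nat, LinearMap.mem_ker] at hv
  simpa using hv

theorem exists_invariant_hyperplane [IsAlgClosed K] [Nontrivial V] :
    ∃ W : Submodule K V, finrank K W + 1 = finrank K V ∧ ∀ v ∈ W, f v ∈ W := by
  obtain ⟨μ, hμ⟩ := exists_eigenvalue f.dualMap
  obtain ⟨φ, hφ⟩ := hμ.exists_hasEigenvector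
  refine ⟨LinearMap.ker φ, Module.Dual.finrank_ker_add_one_of_ne_zero hφ.2, fun v hv => ?_⟩
  have := LinearMap.congr_fun hφ.apply_eq_smul v
  rw [LinearMap.mem_ker] at hv ⊢
  simpa [hv] using this

theorem exists_invariant_hyperplane_le [IsAlgClosed K] {U : Submodule K V}
    (hU : ∀ u ∈ U, f u ∈ U) (hU0 : U ≠ ⊥) :
    ∃ W ≤ U, finrank K W + 1 = finrank K U ∧ ∀ w ∈ W, f w ∈ W := by
  have : Nontrivial U := Submodule.nontrivial_iff_ne_bot.mpr hU0
  obtain ⟨W, hW, hinv⟩ := exists_invariant_hyperplane (f.restrict hU)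
  refine ⟨W.map U.subtype, map_subtype_le _ _, by rwa [finrank_map_subtype_eq], ?_⟩
  rintro _ ⟨w, hw, rfl⟩
  exact ⟨_, hinv w hw, rfl⟩

end Module.End

end LinearAlgebra

section BracketClosed

variable {F : Type*} [Field F] {A : Type*} [LieRing A] [LieAlgebra F A]

theorem exists_lieSubalgebra_finrank_eq_of_lie_mem {V : Submodule F A}
    (hV : ∀ u ∈ V, ∀ v ∈ V, ⁅u, v⁆ ∈ V) :
    ∃ S : LieSubalgebra F A, finrank F S = finrank F V :=
  ⟨{ V with lie_mem' := fun hu hv => hV _ hu _ hv }, rfl⟩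

theorem lie_mem_sup_right {P Q R S : Submodule F A}
    (hQ : ∀ u ∈ P, ∀ v ∈ Q, ⁅u, v⁆ ∈ S) (hR : ∀ u ∈ P, ∀ v ∈ R, ⁅u, v⁆ ∈ S) :
    ∀ u ∈ P, ∀ v ∈ Q ⊔ R, ⁅u, v⁆ ∈ S := by
  intro u hu v hv
  obtain ⟨q, hq, r, hr, rfl⟩ := mem_sup.mp hv
  rw [lie_add]
  exact add_mem (hQ u hu q hq) (hR u hu r hr)

theorem lie_mem_sup {P Q S : Submodule F A} (hPP : ∀ u ∈ P, ∀ v ∈ P, ⁅u, v⁆ ∈ S)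
    (hQQ : ∀ u ∈ Q, ∀ v ∈ Q, ⁅u, v⁆ ∈ S) (hPQ : ∀ u ∈ P, ∀ v ∈ Q, ⁅u, v⁆ ∈ S) :
    ∀ u ∈ P ⊔ Q, ∀ v ∈ P ⊔ Q, ⁅u, v⁆ ∈ S := by
  have hQP : ∀ u ∈ Q, ∀ v ∈ P, ⁅u, v⁆ ∈ S := fun u hu v hv => by
    rw [← lie_skew]
    exact neg_mem (hPQ v hv u hu)
  intro u hu v hv
  obtain ⟨p, hp, q, hq, rfl⟩ := mem_sup.mp hu
  rw [add_lie]
  exact add_mem (lie_mem_sup_right hPP hPQ p hp v hv) (lie_mem_sup_right hQP hQQ q hq v hv)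

theorem lie_mem_span_of_forall_lie_mem_span {s : Set A}
    (h : ∀ u ∈ s, ∀ v ∈ s, ⁅u, v⁆ ∈ span F s) :
    ∀ u ∈ span F s, ∀ v ∈ span F s, ⁅u, v⁆ ∈ span F s := by
  intro u hu v hv
  induction hu using Submodule.span_induction with
  | mem u hu =>
    induction hv using Submodule.span_induction with
    | mem v hv => exact h u hu v hv
    | zero => simp
    | add v w _ _ hv hw => rw [lie_add]; exact add_mem hv hw
    | smul c v _ hv => rw [lie_smul]; exact smul_mem _ c hv
  | zero => simp
  | add u w _ _ hu hw => rw [add_lie]; exact add_mem hu hw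
  | smul c u _ hu => rw [smul_lie]; exact smul_mem _ c hu

theorem lie_eq_zero_of_finrank_le_one [Module.Finite F A] {P : Submodule F A}
    (hP : finrank F P ≤ 1) {u v : A} (hu : u ∈ P) (hv : v ∈ P) : ⁅u, v⁆ = 0 := by
  obtain ⟨w, hw⟩ := finrank_le_one_iff.mp hP
  obtain ⟨a, ha⟩ := hw ⟨u, hu⟩
  obtain ⟨b, hb⟩ := hw ⟨v, hv⟩
  obtain rfl : a • (w : A) = u := congrArg Subtype.val ha
  obtain rfl : b • (w : A) = v := congrArg Subtype.val hb
  simp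

theorem exists_lie_mem_span_singleton_of_finrank_eq_two {W : Submodule F A}
    (hW : finrank F W = 2) : ∃ a ∈ W, ∃ b ∈ W, ∀ u ∈ W, ∀ v ∈ W, ⁅u, v⁆ ∈ F ∙ ⁅a, b⁆ := by
  have : Module.Finite F W := Module.finite_of_finrank_pos (by omega)
  let e := Module.finBasisOfFinrankEq F W hW
  have hspan : ∀ u ∈ W, u ∈ span F {(e 0 : A), (e 1 : A)} := fun u hu => by
    refine mem_span_pair.mpr ⟨e.repr ⟨u, hu⟩ 0, e.repr ⟨u, hu⟩ 1, ?_⟩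
    have := congrArg Subtype.val (e.sum_repr ⟨u, hu⟩)
    rw [Fin.sum_univ_two] at this
    simpa using this
  refine ⟨e 0, (e 0).2, e 1, (e 1).2, fun u hu v hv => ?_⟩
  obtain ⟨a, b, rfl⟩ := mem_span_pair.mp (hspan u hu)
  obtain ⟨c, d, rfl⟩ := mem_span_pair.mp (hspan v hv)
  refine mem_span_singleton.mpr ⟨a * d - b * c, ?_⟩
  simp only [add_lie, lie_add, smul_lie, lie_smul, lie_self]
  rw [← lie_skew (e 1 : A) (e 0 : A)]
  module

theorem exists_lieSubalgebra_finrank_sup [Module.Finite F A] {W P : Submodule F A}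
    (hP : finrank F P ≤ 1) (hWP : Disjoint W P) (hWW : ∀ u ∈ W, ∀ v ∈ W, ⁅u, v⁆ ∈ W ⊔ P)
    (hPW : ∀ u ∈ P, ∀ v ∈ W, ⁅u, v⁆ ∈ W ⊔ P) :
    ∃ S : LieSubalgebra F A, finrank F S = finrank F W + finrank F P := by
  have hPP : ∀ u ∈ P, ∀ v ∈ P, ⁅u, v⁆ ∈ W ⊔ P := fun u hu v hv => by
    rw [lie_eq_zero_of_finrank_le_one hP hu hv]
    exact zero_mem _
  have hWP' : ∀ u ∈ W, ∀ v ∈ P, ⁅u, v⁆ ∈ W ⊔ P := fun u hu v hv => by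
    rw [← lie_skew]
    exact neg_mem (hPW v hv u hu)
  rw [← finrank_sup_add_finrank_inf_eq, hWP.eq_bot, finrank_bot, add_zero]
  exact exists_lieSubalgebra_finrank_eq_of_lie_mem (lie_mem_sup hWW hPP hWP')

theorem exists_lieSubalgebra_finrank_three_of_hasEigenvector {e a b c : A} {α β γ : F}
    (ha : (ad F A e).HasEigenvector α a) (hb : (ad F A e).HasEigenvector β b)
    (hc : (ad F A e).HasEigenvector γ c) (hαβ : α ≠ β) (hαγ : α ≠ γ) (hβγ : β ≠ γ)
    (hab : ⁅a, b⁆ ∈ span F {a, b, c}) (hac : ⁅a, c⁆ ∈ span F {a, b, c})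
    (hbc : ⁅b, c⁆ ∈ span F {a, b, c}) : ∃ S : LieSubalgebra F A, finrank F S = 3 := by
  have hli : LinearIndependent F ![a, b, c] := by
    refine Module.End.eigenvectors_linearIndependent' (ad F A e) ![α, β, γ] ?_ _ ?_
    · intro i j hij
      fin_cases i <;> fin_cases j <;> simp_all [eq_comm]
    · intro i
      fin_cases i <;> assumption
  have hclosed : ∀ u ∈ ({a, b, c} : Set A), ∀ v ∈ ({a, b, c} : Set A),
      ⁅u, v⁆ ∈ span F {a, b, c} := by
    have skew : ∀ {u v : A}, ⁅u, v⁆ ∈ span F {a, b, c} → ⁅v, u⁆ ∈ span F {a, b, c} :=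
      fun h => by rw [← lie_skew]; exact neg_mem h
    simp only [Set.mem_insert_iff, Set.mem_singleton_iff]
    rintro u (rfl | rfl | rfl) v (rfl | rfl | rfl) <;>
      first | rw [lie_self]; exact zero_mem _ | assumption | exact skew ‹_›
  obtain ⟨S, hS⟩ :=
    exists_lieSubalgebra_finrank_eq_of_lie_mem (lie_mem_span_of_forall_lie_mem_span hclosed)
  have hrange : Set.range ![a, b, c] = {a, b, c} := by
    rw [Matrix.range_cons, Matrix.range_cons_cons_empty, Set.singleton_union]
  rw [← hrange, finrank_span_eq_card hli, Fintype.card_fin] at hS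
  exact ⟨S, hS⟩

end BracketClosed

theorem exists_lieSubalgebra_finrank_add_one_of_derivedSeries_ne_top {F A : Type*} [Field F]
    [LieRing A] [LieAlgebra F A] [Module.Finite F A] (h : derivedSeries F A 1 ≠ ⊤) :
    ∃ S : LieSubalgebra F A, finrank F S + 1 = finrank F A := by
  obtain ⟨φ, hφ, hle⟩ := (derivedSeries F A 1).toSubmodule.exists_le_ker_of_lt_top
    (lt_top_iff_ne_top.mpr (by simpa using h))
  rw [← Module.Dual.finrank_ker_add_one_of_ne_zero hφ]
  refine ⟨{ LinearMap.ker φ with lie_mem' := fun {u v} _ _ => hle ?_ }, rfl⟩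
  rw [LieSubmodule.mem_toSubmodule, derivedSeries_def, derivedSeriesOfIdeal_succ,
    derivedSeriesOfIdeal_zero]
  exact LieSubmodule.lie_mem_lie (LieSubmodule.mem_top u) (LieSubmodule.mem_top v)

section AdGenEigenspaces

variable {F : Type*} [Field F] {A : Type*} [LieRing A] [LieAlgebra F A] {x : A}

local notation "𝔼" μ:max => Module.End.maxGenEigenspace (ad F A x) μ

theorem lie_mem_of_maxGenEigenspace_add_le {μ ν : F} {S : Submodule F A}
    (h : 𝔼 (μ + ν) ≤ S) : ∀ u ∈ 𝔼 μ, ∀ v ∈ 𝔼 ν, ⁅u, v⁆ ∈ S :=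
  fun _ hu _ hv => h (LieModule.lie_mem_maxGenEigenspace_toEnd hu hv)

theorem self_mem_maxGenEigenspace_zero : x ∈ 𝔼 0 :=
  LieSubalgebra.self_mem_engel F x

theorem exists_lieSubalgebra_finrank_eq_finrank_zero_add_one [Module.Finite F A] {α : F}
    (hα : α ≠ 0) (h : finrank F (𝔼 α) = 1) :
    ∃ S : LieSubalgebra F A, finrank F S = finrank F (𝔼 0) + 1 := by
  rw [← h]
  refine exists_lieSubalgebra_finrank_sup h.le
    (Module.End.disjoint_genEigenspace _ hα.symm _ _) ?_ ?_
  · exact lie_mem_of_maxGenEigenspace_add_le (by rw [add_zero]; exact le_sup_left)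
  · exact lie_mem_of_maxGenEigenspace_add_le (by rw [add_zero]; exact le_sup_right)

theorem exists_lieSubalgebra_finrank_three_of_finrank_eq_two [Module.Finite F A] (hx : x ≠ 0)
    {α : F} (hα : α ≠ 0) (h2α : 𝔼 (α + α) ≤ 𝔼 0) (h : finrank F (𝔼 α) = 2) :
    ∃ S : LieSubalgebra F A, finrank F S = 3 := by
  obtain ⟨z, hz, hz0, hαz⟩ :
      ∃ z ∈ 𝔼 0, z ≠ 0 ∧ ∀ u ∈ 𝔼 α, ∀ v ∈ 𝔼 α, ⁅u, v⁆ ∈ F ∙ z := by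
    obtain ⟨a, ha, b, hb, hab⟩ := exists_lie_mem_span_singleton_of_finrank_eq_two h
    by_cases h0 : ⁅a, b⁆ = 0
    · refine ⟨x, self_mem_maxGenEigenspace_zero, hx, fun u hu v hv => ?_⟩
      have := hab u hu v hv
      rw [h0, span_zero_singleton, mem_bot] at this
      rw [this]
      exact zero_mem _
    · exact ⟨_, h2α (LieModule.lie_mem_maxGenEigenspace_toEnd ha hb), h0, hab⟩
  have hdisj : Disjoint (𝔼 α) (F ∙ z) := (Module.End.disjoint_genEigenspace _ hα _ _).mono_right
    ((span_singleton_le_iff_mem _ _).mpr hz)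
  have hzα : ∀ u ∈ F ∙ z, ∀ v ∈ 𝔼 α, ⁅u, v⁆ ∈ 𝔼 α ⊔ F ∙ z := fun u hu v hv => by
    obtain ⟨c, rfl⟩ := mem_span_singleton.mp hu
    rw [smul_lie]
    exact smul_mem _ c
      (lie_mem_of_maxGenEigenspace_add_le (by rw [zero_add]; exact le_sup_left) z hz v hv)
  obtain ⟨S, hS⟩ := exists_lieSubalgebra_finrank_sup (finrank_span_singleton hz0).le hdisj
    (fun u hu v hv => mem_sup_right (hαz u hu v hv)) hzα
  exact ⟨S, by rw [hS, h, finrank_span_singleton hz0]⟩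

theorem exists_lieSubalgebra_finrank_three_of_finrank_eq_three [IsAlgClosed F]
    [Module.Finite F A] (hx : x ≠ 0) (hE0 : 𝔼 0 = F ∙ x) {α : F} (hα : α ≠ 0)
    (h2α : 𝔼 (α + α) ≤ 𝔼 0) (h : finrank F (𝔼 α) = 3) :
    ∃ S : LieSubalgebra F A, finrank F S = 3 := by
  obtain ⟨W, hWα, hW, hxW⟩ := (ad F A x).exists_invariant_hyperplane_le
    (fun u hu => lie_mem_of_maxGenEigenspace_add_le (by rw [zero_add]) x
      self_mem_maxGenEigenspace_zero u hu)
    (by rintro hb; rw [hb, finrank_bot] at h; omega)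
  have h0 : finrank F (𝔼 0) = 1 := by rw [hE0, finrank_span_singleton hx]
  have h0W : ∀ u ∈ 𝔼 0, ∀ w ∈ W, ⁅u, w⁆ ∈ W ⊔ 𝔼 0 := fun u hu w hw => by
    rw [hE0] at hu
    obtain ⟨c, rfl⟩ := mem_span_singleton.mp hu
    rw [smul_lie]
    exact smul_mem _ c (mem_sup_left (hxW w hw))
  obtain ⟨S, hS⟩ := exists_lieSubalgebra_finrank_sup h0.le
    ((Module.End.disjoint_genEigenspace _ hα _ _).mono_left hWα)
    (fun u hu v hv => mem_sup_right
      (lie_mem_of_maxGenEigenspace_add_le h2α u (hWα hu) v (hWα hv)))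
    h0W
  exact ⟨S, by omega⟩

theorem exists_lieSubalgebra_finrank_three_of_maxGenEigenspace_add_le_zero (hx : x ≠ 0)
    (hE0 : 𝔼 0 = F ∙ x) {α β : F} {y z : A} (hy : (ad F A x).HasEigenvector α y)
    (hz : (ad F A x).HasEigenvector β z) (hα : α ≠ 0) (hβ : β ≠ 0) (hαβ : α ≠ β)
    (hαβ0 : 𝔼 (α + β) ≤ 𝔼 0) : ∃ S : LieSubalgebra F A, finrank F S = 3 := by
  have hx' : (ad F A x).HasEigenvector 0 x := ⟨by simp, hx⟩
  refine exists_lieSubalgebra_finrank_three_of_hasEigenvector hx' hy hz hα.symm hβ.symm hαβ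
    ?_ ?_ ?_
  · rw [← ad_apply (R := F), hy.apply_eq_smul]
    exact smul_mem _ _ (subset_span (by simp))
  · rw [← ad_apply (R := F), hz.apply_eq_smul]
    exact smul_mem _ _ (subset_span (by simp))
  · have := lie_mem_of_maxGenEigenspace_add_le hαβ0 y
      (Module.End.eigenspace_le_maxGenEigenspace hy.1) z
      (Module.End.eigenspace_le_maxGenEigenspace hz.1)
    rw [hE0] at this
    exact span_mono (by simp) this

theorem exists_lieSubalgebra_finrank_three_of_three_eigenvalues [DecidableEq F]
    [Module.Finite F A] (hx : x ≠ 0) (hE0 : 𝔼 0 = F ∙ x) {α β γ : F} {y z w : A}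
    (hy : (ad F A x).HasEigenvector α y) (hz : (ad F A x).HasEigenvector β z)
    (hw : (ad F A x).HasEigenvector γ w) (hα : α ≠ 0) (hβ : β ≠ 0) (hγ : γ ≠ 0)
    (hαβ : α ≠ β) (hαγ : α ≠ γ) (hβγ : β ≠ γ)
    (hs : ∑ σ ∈ {0, α, β, γ}, finrank F (𝔼 σ) = finrank F A)
    (hα1 : finrank F (𝔼 α) = 1) (hβ1 : finrank F (𝔼 β) = 1) (hγ1 : finrank F (𝔼 γ) = 1) :
    ∃ S : LieSubalgebra F A, finrank F S = 3 := by
  have pair : ∀ {a b : F} {u v : A}, (ad F A x).HasEigenvector a u →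
      (ad F A x).HasEigenvector b v → a ≠ 0 → b ≠ 0 → a ≠ b →
      (a + b ∈ ({0, α, β, γ} : Finset F) → a + b = 0) →
      ∃ S : LieSubalgebra F A, finrank F S = 3 := fun hu hv ha hb hab h =>
    exists_lieSubalgebra_finrank_three_of_maxGenEigenspace_add_le_zero hx hE0 hu hv ha hb hab
      ((ad F A x).maxGenEigenspace_le_of_sum_finrank_eq hs h)
  by_cases hαβγ : α + β = γ
  swap; · exact pair hy hz hα hβ hαβ (by simp [hα, hβ, hαβγ])
  by_cases hαγβ : α + γ = β
  swap; · exact pair hy hw hα hγ hαγ (by simp [hα, hγ, hαγβ])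
  by_cases hβγα : β + γ = α
  swap; · exact pair hz hw hβ hγ hβγ (by simp [hβ, hγ, hβγα])
  -- each of `α, β, γ` is the sum of the other two, so `y, z, w` span a subalgebra
  have lie_mem : ∀ {a b c : F} {u v t : A}, (ad F A x).HasEigenvector a u →
      (ad F A x).HasEigenvector b v → (ad F A x).HasEigenvector c t → a + b = c →
      finrank F (𝔼 c) = 1 → ⁅u, v⁆ ∈ F ∙ t := fun hu hv ht habc hc => by
    rw [← eq_span_singleton_of_mem_of_finrank_eq_one hc
      (Module.End.eigenspace_le_maxGenEigenspace ht.1) ht.2, ← habc]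
    exact LieModule.lie_mem_maxGenEigenspace_toEnd
      (Module.End.eigenspace_le_maxGenEigenspace hu.1)
      (Module.End.eigenspace_le_maxGenEigenspace hv.1)
  refine exists_lieSubalgebra_finrank_three_of_hasEigenvector hy hz hw hαβ hαγ hβγ ?_ ?_ ?_
  · exact span_mono (by simp) (lie_mem hy hz hw hαβγ hγ1)
  · exact span_mono (by simp) (lie_mem hy hw hz hαγβ hβ1)
  · exact span_mono (by simp) (lie_mem hz hw hy hβγα hα1)

theorem exists_lieSubalgebra_finrank_three_of_two_eigenvalues [IsAlgClosed F]
    [Module.Finite F A] (hA : finrank F A = 4) (hx : x ≠ 0) (hE0 : 𝔼 0 = F ∙ x) {α β : F}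
    (hα : α ≠ 0) (hβ : β ≠ 0) (hβα : β ≠ α) (hαE : 𝔼 α ≠ ⊥) (hβE : 𝔼 β ≠ ⊥) :
    ∃ S : LieSubalgebra F A, finrank F S = 3 := by
  classical
  have h0 : finrank F (𝔼 0) = 1 := by rw [hE0, finrank_span_singleton hx]
  have sum₃ : ∑ σ ∈ {0, α, β}, finrank F (𝔼 σ) = 1 + finrank F (𝔼 α) + finrank F (𝔼 β) := by
    rw [Finset.sum_insert (by simp [hα.symm, hβ.symm]), Finset.sum_pair hβα.symm, h0, add_assoc]
  have h₃ := (ad F A x).sum_finrank_maxGenEigenspace_le {0, α, β}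
  rw [sum₃, hA] at h₃
  obtain ⟨y, hy⟩ := Module.End.exists_hasEigenvector_of_maxGenEigenspace_ne_bot hαE
  obtain ⟨z, hz⟩ := Module.End.exists_hasEigenvector_of_maxGenEigenspace_ne_bot hβE
  by_cases hsum₃ : 1 + finrank F (𝔼 α) + finrank F (𝔼 β) = 4
  · exact exists_lieSubalgebra_finrank_three_of_maxGenEigenspace_add_le_zero hx hE0 hy hz hα hβ
      hβα.symm ((ad F A x).maxGenEigenspace_le_of_sum_finrank_eq (by rw [sum₃, hsum₃, hA])
        (by simp [hα, hβ]))
  obtain ⟨γ, hγs, hγE⟩ := (ad F A x).exists_maxGenEigenspace_ne_bot_of_sum_finrank_lt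
    (s := {0, α, β}) (by rw [sum₃, hA]; omega)
  obtain ⟨hγ, hγα, hγβ⟩ : γ ≠ 0 ∧ γ ≠ α ∧ γ ≠ β := by simpa [not_or] using hγs
  have sum₄ : ∑ σ ∈ {0, α, β, γ}, finrank F (𝔼 σ) =
      1 + finrank F (𝔼 α) + finrank F (𝔼 β) + finrank F (𝔼 γ) := by
    rw [Finset.sum_insert (by simp [hα.symm, hβ.symm, hγ.symm]),
      Finset.sum_insert (by simp [hβα.symm, hγα.symm]), Finset.sum_pair hγβ.symm, h0]
    ring
  have h₄ := (ad F A x).sum_finrank_maxGenEigenspace_le {0, α, β, γ}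
  have hα1 := one_le_finrank_iff.mpr hαE
  have hβ1 := one_le_finrank_iff.mpr hβE
  have hγ1 := one_le_finrank_iff.mpr hγE
  rw [sum₄, hA] at h₄
  obtain ⟨w, hw⟩ := Module.End.exists_hasEigenvector_of_maxGenEigenspace_ne_bot hγE
  exact exists_lieSubalgebra_finrank_three_of_three_eigenvalues hx hE0 hy hz hw hα hβ hγ
    hβα.symm hγα.symm hγβ.symm (by rw [sum₄, hA]; omega) (by omega) (by omega) (by omega)

theorem exists_lieSubalgebra_finrank_three_of_finrank_zero_eq_one [IsAlgClosed F]
    [Module.Finite F A] (hA : finrank F A = 4) (hx : x ≠ 0) (h0 : finrank F (𝔼 0) = 1)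
    {α : F} (hα : α ≠ 0) (hαE : 𝔼 α ≠ ⊥) : ∃ S : LieSubalgebra F A, finrank F S = 3 := by
  classical
  have hE0 : 𝔼 0 = F ∙ x :=
    eq_span_singleton_of_mem_of_finrank_eq_one h0 self_mem_maxGenEigenspace_zero hx
  have sum₂ : ∑ σ ∈ {0, α}, finrank F (𝔼 σ) = 1 + finrank F (𝔼 α) := by
    rw [Finset.sum_pair hα.symm, h0]
  have h₂ := (ad F A x).sum_finrank_maxGenEigenspace_le {0, α}
  rw [sum₂, hA] at h₂
  by_cases hα3 : finrank F (𝔼 α) = 3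
  · exact exists_lieSubalgebra_finrank_three_of_finrank_eq_three hx hE0 hα
      ((ad F A x).maxGenEigenspace_le_of_sum_finrank_eq (by rw [sum₂, hα3, hA]) (by simp [hα]))
      hα3
  obtain ⟨β, hβs, hβE⟩ := (ad F A x).exists_maxGenEigenspace_ne_bot_of_sum_finrank_lt
    (s := {0, α}) (by rw [sum₂, hA]; omega)
  obtain ⟨hβ, hβα⟩ : β ≠ 0 ∧ β ≠ α := by simpa [not_or] using hβs
  exact exists_lieSubalgebra_finrank_three_of_two_eigenvalues hA hx hE0 hα hβ hβα hαE hβE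

theorem exists_lieSubalgebra_finrank_three_of_not_isNilpotent [IsAlgClosed F]
    [Module.Finite F A] (hA : finrank F A = 4) (hx : ¬IsNilpotent (ad F A x)) :
    ∃ S : LieSubalgebra F A, finrank F S = 3 := by
  classical
  have hx0 : x ≠ 0 := by
    rintro rfl
    exact hx (by simp)
  have h0 : 1 ≤ finrank F (𝔼 0) := one_le_finrank_iff.mpr
    ((Submodule.ne_bot_iff _).mpr ⟨x, self_mem_maxGenEigenspace_zero, hx0⟩)
  have h0' : finrank F (𝔼 0) < 4 := by
    refine lt_of_le_of_ne (hA ▸ Submodule.finrank_le _) fun h => hx ?_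
    exact (ad F A x).isNilpotent_of_maxGenEigenspace_zero_eq_top
      (eq_top_of_finrank_eq (h.trans hA.symm))
  obtain ⟨α, hα, hαE⟩ := (ad F A x).exists_maxGenEigenspace_ne_bot_of_sum_finrank_lt
    (s := {0}) (by rwa [Finset.sum_singleton, hA])
  rw [Finset.mem_singleton] at hα
  have sum₂ : ∑ σ ∈ {0, α}, finrank F (𝔼 σ) = finrank F (𝔼 0) + finrank F (𝔼 α) :=
    Finset.sum_pair (Ne.symm hα)
  have hα1 : 1 ≤ finrank F (𝔼 α) := one_le_finrank_iff.mpr hαE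
  have h₂ := (ad F A x).sum_finrank_maxGenEigenspace_le {0, α}
  rw [sum₂, hA] at h₂
  obtain h01 | h02 | h03 : finrank F (𝔼 0) = 1 ∨ finrank F (𝔼 0) = 2 ∨ finrank F (𝔼 0) = 3 := by
    omega
  · exact exists_lieSubalgebra_finrank_three_of_finrank_zero_eq_one hA hx0 h01 hα hαE
  · obtain hα1 | hα2 : finrank F (𝔼 α) = 1 ∨ finrank F (𝔼 α) = 2 := by omega
    · obtain ⟨S, hS⟩ := exists_lieSubalgebra_finrank_eq_finrank_zero_add_one hα hα1
      exact ⟨S, by omega⟩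
    · exact exists_lieSubalgebra_finrank_three_of_finrank_eq_two hx0 hα
        ((ad F A x).maxGenEigenspace_le_of_sum_finrank_eq (by rw [sum₂, h02, hα2, hA])
          (by simp [hα]))
        hα2
  · exact ⟨LieSubalgebra.engel F x, h03⟩

end AdGenEigenspaces

/-- Every 4-dimensional Lie algebra over an algebraically closed field has a
Lie subalgebra of codimension 1, i.e. of dimension 3. -/
theorem four_dim_lie_algebra_has_codim_one_subalgebra
    (F : Type*) [Field F] [IsAlgClosed F]
    (A : Type*) [LieRing A] [LieAlgebra F A]
    [Module.Finite F A] (hdim : Module.finrank F A = 4) :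
    ∃ S : LieSubalgebra F A, Module.finrank F S = 3 := by
  by_cases h : ∀ x : A, IsNilpotent (ad F A x)
  · have : LieRing.IsNilpotent A := isNilpotent_iff_forall.mpr h
    have : Nontrivial A := Module.nontrivial_of_finrank_pos (R := F) (by omega)
    obtain ⟨S, hS⟩ := exists_lieSubalgebra_finrank_add_one_of_derivedSeries_ne_top
      (derivedSeries_lt_top_of_solvable F A).ne
    exact ⟨S, by omega⟩
  · obtain ⟨x, hx⟩ := not_forall.mp h
    exact exists_lieSubalgebra_finrank_three_of_not_isNilpotent hdim hx
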